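/- Let γ be a connected marked graph with half-edges and 𝒱 ⊆ Ver with 𝒱 ≠ Ver. Then, in ℤ, Σ_{v∈𝒱}(|ε⁻¹(v)| − 3) + |F†_γ(𝒱)| + |E_γ(𝒱)| + |π₀(γ,𝒱)| ≥ 3·(|E_γ(𝒱)| − |𝒱| + |π₀(γ,𝒱)|), where ε⁻¹(v) ⊆ S ⊔ Fl denotes the set of marked labels and flags carried by the vertex v. -/

import Mathlib

/-- The set of edges of a graph with half-edges: unordered pairs `{f, ϑ f}`. -/
def edgeSet {F : Type*} (ϑ : F → F) : Set (Set F) :=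
  {e | ∃ f, e = {f, ϑ f}}

/-- The edges both of whose flags have ε-image in `S`. -/
def edgesIn {V F : Type*} (ε : F → V) (ϑ : F → F) (S : Set V) : Set (Set F) :=
  {e | ∃ f, e = {f, ϑ f} ∧ ε f ∈ S ∧ ε (ϑ f) ∈ S}

/-- One-step adjacency in the graph: `v` and `v'` are the two endpoints of an edge. -/
def Step {V F : Type*} (ε : F → V) (ϑ : F → F) (v v' : V) : Prop :=
  ∃ f, ε f = v ∧ ε (ϑ f) = v'

/-- The graph is connected: any two distinct vertices are joined by a chain of edges. -/
def IsConnectedGraph {V F : Type*} (ε : F → V) (ϑ : F → F) : Prop :=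
  ∀ v v' : V, v ≠ v' → Relation.ReflTransGen (Step ε ϑ) v v'

/-- One-step adjacency within the induced subgraph on the vertex subset `S`. -/
def StepIn {V F : Type*} (ε : F → V) (ϑ : F → F) (S : Set V) (v v' : V) : Prop :=
  v ∈ S ∧ v' ∈ S ∧ ∃ f, ε f = v ∧ ε (ϑ f) = v'

/-- The connected component of `v` in the induced subgraph on `S`. -/
def component {V F : Type*} (ε : F → V) (ϑ : F → F) (S : Set V) (v : V) : Set V :=
  {w | Relation.ReflTransGen (StepIn ε ϑ S) v w}

/-- `π₀(γ,S)`: the set of connected components of the induced subgraph on `S`. -/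
def pi0 {V F : Type*} (ε : F → V) (ϑ : F → F) (S : Set V) : Set (Set V) :=
  {C | ∃ v ∈ S, C = component ε ϑ S v}

/-- The crossing edges of a subset `C` of vertices: edges with exactly one flag
having ε-image in `C`. -/
def crossingEdges {V F : Type*} (ε : F → V) (ϑ : F → F) (C : Set V) : Set (Set F) :=
  {e | ∃ f, e = {f, ϑ f} ∧ ε f ∉ C ∧ ε (ϑ f) ∈ C}

/-- One-step adjacency in the graph obtained by deleting the two flags `f₀`, `ϑ f₀`. -/
def StepAvoid {V F : Type*} (ε : F → V) (ϑ : F → F) (f₀ : F) (v v' : V) : Prop :=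
  ∃ g, g ≠ f₀ ∧ g ≠ ϑ f₀ ∧ ε g = v ∧ ε (ϑ g) = v'

/-- The flag `f₀` disconnects `C` from the rest of the graph: after deleting the flags
`f₀` and `ϑ f₀`, there is no chain of edges from a vertex of `C` to a vertex outside `C`. -/
def Disconnects {V F : Type*} (ε : F → V) (ϑ : F → F) (C : Set V) (f₀ : F) : Prop :=
  ∀ v ∈ C, ∀ v' ∉ C, ¬ Relation.ReflTransGen (StepAvoid ε ϑ f₀) v v'

/-- `F°_γ(S)`: the flags `f` with `ε f ∉ S` that disconnect from the rest of the graph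
the connected component of the induced subgraph on `S` containing `ε (ϑ f)`. -/
def Fcirc {V F : Type*} (ε : F → V) (ϑ : F → F) (S : Set V) : Set F :=
  {f | ε f ∉ S ∧ ε (ϑ f) ∈ S ∧ Disconnects ε ϑ (component ε ϑ S (ε (ϑ f))) f}

/-- `F†_γ(S)`: the flags of `F°_γ(S)` whose associated component carries no marked label. -/
def Fdagger {V F L : Type*} (ε : F → V) (ϑ : F → F) (εS : L → V) (S : Set V) : Set F :=
  {f | f ∈ Fcirc ε ϑ S ∧ ∀ s : L, εS s ∉ component ε ϑ S (ε (ϑ f))}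

/-!
Write `|ε⁻¹(v)|` as the number of marks plus the number of flags at `v`. The flags at vertices
of `𝒱` are the two flags of each edge of `E_γ(𝒱)` together with the exit flags (those whose
opposite flag lies outside `𝒱`), so the inequality reduces to
`2 |π₀(γ,𝒱)| ≤ #exit flags + #marks on 𝒱 + |F†_γ(𝒱)|`. This is proved component by component:
since `𝒱 ≠ Ver` and `γ` is connected, every component `C` has an exit flag `g`; if `g` is the
only one and `C` carries no mark, then removing the edge of `g` cuts `C` off, so `ϑ g ∈ F†_γ(𝒱)`.
-/

open Finset Function

theorem Relation.ReflTransGen.exists_mem_notMem_step {α : Type*} {r : α → α → Prop} {C : Set α}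
    {a b : α} (h : Relation.ReflTransGen r a b) (ha : a ∈ C) (hb : b ∉ C) :
    ∃ x ∈ C, ∃ y ∉ C, r x y := by
  induction h with
  | refl => exact absurd ha hb
  | @tail c d _ hcd ih =>
    by_cases hc : c ∈ C
    · exact ⟨c, hc, d, hb, hcd⟩
    · exact ih hc

theorem Set.Finite.sum_ncard_fiber {α β : Type*} [Finite α] (g : α → β) {s : Set β}
    (hs : s.Finite) : ∑ b ∈ hs.toFinset, {a | g a = b}.ncard = (g ⁻¹' s).ncard := by
  classical
  have := Fintype.ofFinite α
  simp only [Set.ncard_eq_toFinset_card', Set.toFinset_ofPred]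
  convert sum_card_fiberwise_eq_card_filter Finset.univ hs.toFinset g using 2
  ext; simp

section HalfEdgeGraph

variable {V F : Type*} {ε : F → V} {ϑ : F → F} {S C : Set V} {v w : V}

def exitFlags (ε : F → V) (ϑ : F → F) (S : Set V) : Set F :=
  {f | ε f ∈ S ∧ ε (ϑ f) ∉ S}

theorem StepIn.symm (hinv : Involutive ϑ) (h : StepIn ε ϑ S v w) : StepIn ε ϑ S w v := by
  obtain ⟨hv, hw, f, rfl, rfl⟩ := h
  exact ⟨hw, hv, ϑ f, rfl, by rw [hinv f]⟩

theorem mem_component_self : v ∈ component ε ϑ S v :=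
  Relation.ReflTransGen.refl

theorem mem_of_mem_component (hv : v ∈ S) (hw : w ∈ component ε ϑ S v) : w ∈ S := by
  induction hw with
  | refl => exact hv
  | tail _ h _ => exact h.2.1

theorem component_eq_of_mem (hinv : Involutive ϑ) (hw : w ∈ component ε ϑ S v) :
    component ε ϑ S w = component ε ϑ S v := by
  have : Std.Symm (StepIn ε ϑ S) := ⟨fun _ _ => StepIn.symm hinv⟩
  have hwv : Relation.ReflTransGen (StepIn ε ϑ S) w v := Std.Symm.symm _ _ hw
  ext x
  exact ⟨hw.trans, hwv.trans⟩

theorem mem_component_of_flag (hv : v ∈ S) {g : F} (hg : ε g ∈ component ε ϑ S v)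
    (hgS : ε (ϑ g) ∈ S) : ε (ϑ g) ∈ component ε ϑ S v :=
  hg.tail ⟨mem_of_mem_component hv hg, hgS, g, rfl, rfl⟩

theorem component_eq_iff_mem (hinv : Involutive ϑ) (hC : C ∈ pi0 ε ϑ S) :
    component ε ϑ S v = C ↔ v ∈ C := by
  obtain ⟨u, -, rfl⟩ := hC
  exact ⟨fun h => h ▸ mem_component_self, component_eq_of_mem hinv⟩

theorem exists_exitFlags_mem_component (hconn : IsConnectedGraph ε ϑ) (hS : S ≠ Set.univ)
    (hv : v ∈ S) : ∃ g ∈ exitFlags ε ϑ S, ε g ∈ component ε ϑ S v := by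
  obtain ⟨u, hu⟩ := (Set.ne_univ_iff_exists_notMem S).1 hS
  obtain ⟨_, hg, _, hgS, g, rfl, rfl⟩ :=
    (hconn v u (by rintro rfl; exact hu hv)).exists_mem_notMem_step mem_component_self
      (fun h => hu (mem_of_mem_component hv h))
  exact ⟨g, ⟨mem_of_mem_component hv hg, fun h => hgS (mem_component_of_flag hv hg h)⟩, hg⟩

theorem disconnects_of_forall_eq (hinv : Involutive ϑ) {g : F}
    (h : ∀ f, ε f ∈ C → ε (ϑ f) ∉ C → f = g) : Disconnects ε ϑ C (ϑ g) := by
  intro v hv w hw hvw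
  obtain ⟨_, hfC, _, hfC', f, -, hfg, rfl, rfl⟩ := hvw.exists_mem_notMem_step hv hw
  exact hfg (by rw [hinv, h f hfC hfC'])

theorem mem_Fdagger_of_forall_eq {L : Type*} {εS : L → V} (hinv : Involutive ϑ) (hv : v ∈ S)
    {g : F} (hg : g ∈ exitFlags ε ϑ S) (hgv : ε g ∈ component ε ϑ S v)
    (huniq : ∀ f ∈ exitFlags ε ϑ S, ε f ∈ component ε ϑ S v → f = g)
    (hmark : ∀ l, εS l ∉ component ε ϑ S v) : ϑ g ∈ Fdagger ε ϑ εS S := by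
  have hcomp : component ε ϑ S (ε (ϑ (ϑ g))) = component ε ϑ S v := by
    rw [hinv]; exact component_eq_of_mem hinv hgv
  refine ⟨⟨hg.2, by rw [hinv]; exact hg.1, ?_⟩, by rwa [hcomp]⟩
  rw [hcomp]
  refine disconnects_of_forall_eq hinv fun f hf hf' => huniq f ⟨mem_of_mem_component hv hf, ?_⟩ hf
  exact fun h => hf' (mem_component_of_flag hv hf h)

theorem ncard_setOf_eq_two_mul_ncard_pairs [Finite F] (hinv : Involutive ϑ)
    (hfpf : ∀ f, ϑ f ≠ f) {p : F → Prop} (hp : ∀ f, p f → p (ϑ f)) :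
    {f | p f}.ncard = 2 * {e : Set F | ∃ f, e = {f, ϑ f} ∧ p f}.ncard := by
  classical
  have := Fintype.ofFinite F
  set pair : F → Set F := fun f => {f, ϑ f}
  have hpairs : {e : Set F | ∃ f, e = pair f ∧ p f} = ↑((univ.filter p).image pair) := by
    ext e; simp [eq_comm, and_comm]
  have hfiber : ∀ e ∈ (univ.filter p).image pair, #{f ∈ univ.filter p | pair f = e} = 2 := by
    simp only [mem_image, mem_filter, mem_univ, true_and]
    rintro _ ⟨f, hf, rfl⟩
    rw [← card_pair (hfpf f).symm]
    congr 1
    ext a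
    simp only [pair, mem_filter, mem_univ, true_and, Set.pair_eq_pair_iff, mem_insert,
      mem_singleton]
    constructor
    · rintro ⟨-, ⟨rfl, -⟩ | ⟨rfl, -⟩⟩ <;> simp
    · rintro (rfl | rfl)
      · exact ⟨hf, .inl ⟨rfl, rfl⟩⟩
      · exact ⟨hp f hf, .inr ⟨rfl, hinv f⟩⟩
  rw [hpairs, Set.ncard_coe_finset, Set.ncard_eq_toFinset_card', Set.toFinset_ofPred,
    card_eq_sum_card_image pair, sum_const_nat hfiber, mul_comm]

theorem ncard_preimage_eq_two_mul_ncard_edgesIn_add [Finite F] (hinv : Involutive ϑ)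
    (hfpf : ∀ f, ϑ f ≠ f) (S : Set V) :
    (ε ⁻¹' S).ncard = 2 * (edgesIn ε ϑ S).ncard + (exitFlags ε ϑ S).ncard := by
  have hinner : {f | ε f ∈ S ∧ ε (ϑ f) ∈ S}.ncard = 2 * (edgesIn ε ϑ S).ncard :=
    ncard_setOf_eq_two_mul_ncard_pairs hinv hfpf fun f hf => ⟨hf.2, by rw [hinv]; exact hf.1⟩
  rw [← hinner]
  exact (Set.ncard_inter_add_ncard_sdiff_eq_ncard (ε ⁻¹' S) ((ε ∘ ϑ) ⁻¹' S)).symm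

theorem sum_ncard_sep_mem_pi0 [Finite V] {α : Type*} [Finite α] (hinv : Involutive ϑ)
    (g : α → V) {s : Set α} (hs : ∀ a ∈ s, g a ∈ S) :
    ∑ C ∈ (pi0 ε ϑ S).toFinite.toFinset, {a ∈ s | g a ∈ C}.ncard = s.ncard := by
  classical
  have := Fintype.ofFinite α
  have hmaps : (s.toFinset : Set α).MapsTo (fun a => component ε ϑ S (g a))
      (pi0 ε ϑ S).toFinite.toFinset := fun a ha => by
    simp only [Set.coe_toFinset] at ha
    simpa using ⟨g a, hs a ha, rfl⟩
  rw [Set.ncard_eq_toFinset_card' s, card_eq_sum_card_fiberwise hmaps]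
  refine sum_congr rfl fun C hC => ?_
  rw [Set.Finite.mem_toFinset] at hC
  rw [Set.ncard_eq_toFinset_card']
  congr 1
  ext a
  simp only [Set.mem_toFinset, Set.mem_ofPred_eq, mem_filter]
  exact and_congr_right fun ha => (component_eq_iff_mem hinv hC).symm

theorem two_le_ncard_exitFlags_add_ncard_marks_add_ncard_Fdagger [Finite F] {L : Type*}
    [Finite L] (εS : L → V) (hinv : Involutive ϑ) (hconn : IsConnectedGraph ε ϑ)
    (hS : S ≠ Set.univ) (hC : C ∈ pi0 ε ϑ S) :
    2 ≤ {f ∈ exitFlags ε ϑ S | ε f ∈ C}.ncard + {l ∈ εS ⁻¹' S | εS l ∈ C}.ncard +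
      {f ∈ Fdagger ε ϑ εS S | ε (ϑ f) ∈ C}.ncard := by
  obtain ⟨v, hv, rfl⟩ := hC
  set exits := {f ∈ exitFlags ε ϑ S | ε f ∈ component ε ϑ S v}
  set marks := {l ∈ εS ⁻¹' S | εS l ∈ component ε ϑ S v}
  set dagger := {f ∈ Fdagger ε ϑ εS S | ε (ϑ f) ∈ component ε ϑ S v}
  obtain ⟨g, hg, hgv⟩ := exists_exitFlags_mem_component hconn hS hv
  have hexit : 1 ≤ exits.ncard := (Set.ncard_pos).2 ⟨g, hg, hgv⟩
  by_cases hmany : 2 ≤ exits.ncard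
  · omega
  by_cases hmarked : 1 ≤ marks.ncard
  · omega
  have huniq : ∀ f ∈ exitFlags ε ϑ S, ε f ∈ component ε ϑ S v → f = g := fun f hf hfv =>
    (Set.ncard_le_one_iff).1 (show exits.ncard ≤ 1 by omega) ⟨hf, hfv⟩ ⟨hg, hgv⟩
  have hmark : ∀ l, εS l ∉ component ε ϑ S v := fun l hl =>
    hmarked <| (Set.ncard_pos).2 ⟨l, (mem_of_mem_component hv hl : εS l ∈ S), hl⟩
  have hdagger : 1 ≤ dagger.ncard :=
    (Set.ncard_pos).2 ⟨ϑ g, mem_Fdagger_of_forall_eq hinv hv hg hgv huniq hmark, by rwa [hinv]⟩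
  omega

theorem two_mul_ncard_pi0_le [Finite V] [Finite F] {L : Type*} [Finite L] (εS : L → V)
    (hinv : Involutive ϑ) (hconn : IsConnectedGraph ε ϑ) (hS : S ≠ Set.univ) :
    2 * (pi0 ε ϑ S).ncard ≤
      (exitFlags ε ϑ S).ncard + (εS ⁻¹' S).ncard + (Fdagger ε ϑ εS S).ncard := by
  rw [← sum_ncard_sep_mem_pi0 hinv ε fun _ hf => hf.1,
    ← sum_ncard_sep_mem_pi0 hinv εS (s := εS ⁻¹' S) fun _ hl => hl,
    ← sum_ncard_sep_mem_pi0 hinv (ε ∘ ϑ) fun _ hf => hf.1.2.1,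
    ← sum_add_distrib, ← sum_add_distrib, Set.ncard_eq_toFinset_card _ (Set.toFinite _),
    mul_comm, ← smul_eq_mul, ← sum_const]
  exact sum_le_sum fun C hC => two_le_ncard_exitFlags_add_ncard_marks_add_ncard_Fdagger εS
    hinv hconn hS ((Set.Finite.mem_toFinset _).1 hC)

end HalfEdgeGraph

/-- For a connected marked graph with half-edges and a proper vertex subset
`𝒱`, in ℤ:
`Σ_{v∈𝒱}(|ε⁻¹(v)| − 3) + |F†_γ(𝒱)| + |E_γ(𝒱)| + |π₀(γ,𝒱)|
  ≥ 3·(|E_γ(𝒱)| − |𝒱| + |π₀(γ,𝒱)|)`,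
where `|ε⁻¹(v)|` counts the marked labels and flags carried by `v`. -/
theorem stmt8 {V F L : Type*} [Fintype V] [Fintype F] [Fintype L]
    (ε : F → V) (ϑ : F → F) (εS : L → V)
    (hinv : Function.Involutive ϑ) (hfpf : ∀ f, ϑ f ≠ f)
    (hconn : IsConnectedGraph ε ϑ)
    (𝒱 : Set V) (h𝒱 : 𝒱 ≠ Set.univ) :
    3 * (((edgesIn ε ϑ 𝒱).ncard : ℤ) - 𝒱.ncard + (pi0 ε ϑ 𝒱).ncard) ≤
      (∑ v ∈ 𝒱.toFinite.toFinset,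
          ((({s : L | εS s = v}.ncard : ℤ) + ({f : F | ε f = v}.ncard : ℤ)) - 3))
        + (Fdagger ε ϑ εS 𝒱).ncard + (edgesIn ε ϑ 𝒱).ncard + (pi0 ε ϑ 𝒱).ncard := by
  have hlabels := (Set.toFinite 𝒱).sum_ncard_fiber εS
  have hflags := (Set.toFinite 𝒱).sum_ncard_fiber ε
  have hsplit := ncard_preimage_eq_two_mul_ncard_edgesIn_add (ε := ε) hinv hfpf 𝒱
  have hcomp := two_mul_ncard_pi0_le εS hinv hconn h𝒱
  rw [sum_sub_distrib, sum_add_distrib, ← Nat.cast_sum, ← Nat.cast_sum, hlabels, hflags,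
    sum_const, nsmul_eq_mul, ← Set.ncard_eq_toFinset_card 𝒱]
  omega
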